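/- There exists a universal constant C < ∞ such that for every 0 < δ < arsinh(1) and every 0 < ℓ ≤ 2δ, the squared L² norm of the quadratic differential dw² over the δ-thin part of the collar C(ℓ) satisfies |‖dw²‖²_{L²(δ-thin(C(ℓ)))} − 32π⁵·ℓ^{−3}| ≤ C·δ^{−3}, where ‖dw²‖²_{L²(δ-thin(C(ℓ)))} = 8π∫_{−X_δ(ℓ)}^{X_δ(ℓ)} ρ_ℓ(s)^{−2} ds = (32π³/ℓ²)∫_{−X_δ(ℓ)}^{X_δ(ℓ)} cos²(ℓs/(2π)) ds. That is, ‖dw²‖²_{L²(δ-thin(C(ℓ)))} = C₀ℓ^{−3} + O(δ^{−3}) with C₀ = 32π⁵. -/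

import Mathlib

open Real Set MeasureTheory

/-- Conformal factor of the collar metric. -/
noncomputable def collarRho (ℓ s : ℝ) : ℝ :=
  ℓ / (2 * π * Real.cos (ℓ * s / (2 * π)))

/-- Half-length of the `δ`-thin part of the collar. -/
noncomputable def collarXdelta (δ ℓ : ℝ) : ℝ :=
  if Real.sinh (ℓ / 2) ≤ Real.sinh δ then
    (2 * π / ℓ) * (π / 2 - Real.arcsin (Real.sinh (ℓ / 2) / Real.sinh δ))
  else 0

/-!
Since `ρ_ℓ(s)⁻² = (2π/ℓ)² cos²(ℓs/(2π))`, the integral is elementary. Writing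
`θ = arcsin (sinh (ℓ/2) / sinh δ)`, the endpoint of the thin part satisfies `ℓ X_δ / (2π) = π/2 - θ`,
and integrating `cos²` gives exactly `32π⁵/ℓ³ - (32π⁴/ℓ³)(2θ - sin 2θ)`. The error is controlled
by `x - sin x ≤ x³/6` together with `θ ≤ (π/2) sin θ` (Jordan's inequality) and
`sinh (ℓ/2) / sinh δ ≤ ℓ / (2δ)` (convexity of `sinh` on `[0, ∞)`), so it is `O(δ⁻³)`.
-/

lemma Real.convexOn_sinh : ConvexOn ℝ (Ici 0) sinh := by
  refine MonotoneOn.convexOn_of_deriv (convex_Ici 0) continuous_sinh.continuousOn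
    differentiable_sinh.differentiableOn ?_
  intro x hx y hy hxy
  rw [interior_Ici] at hx hy
  simp only [deriv_sinh]
  rw [cosh_le_cosh, abs_of_pos hx, abs_of_pos hy]
  exact hxy

lemma Real.sinh_div_sinh_le_div {a b : ℝ} (ha : 0 ≤ a) (hab : a ≤ b) :
    sinh a / sinh b ≤ a / b := by
  rcases (ha.trans hab).eq_or_lt with rfl | hb
  · simp
  have ht : a / b ∈ Icc (0 : ℝ) 1 := ⟨by positivity, (div_le_one hb).2 hab⟩
  have := convexOn_sinh.2 (self_mem_Ici (a := (0 : ℝ))) (mem_Ici.2 hb.le)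
    (sub_nonneg.2 ht.2) ht.1 (sub_add_cancel 1 (a / b))
  simp only [smul_eq_mul, mul_zero, zero_add, sinh_zero, div_mul_cancel₀ a hb.ne'] at this
  rwa [div_le_iff₀ (sinh_pos_iff.2 hb)]

lemma Real.arcsin_le_pi_div_two_mul {u : ℝ} (hu₀ : 0 ≤ u) (hu₁ : u ≤ 1) :
    arcsin u ≤ π / 2 * u := by
  have h := mul_le_sin (arcsin_nonneg.2 hu₀) (arcsin_le_pi_div_two u)
  rw [sin_arcsin (by linarith) hu₁] at h
  have hπ := pi_pos
  rw [div_mul_eq_mul_div, div_le_iff₀ hπ] at h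
  nlinarith

lemma collarRho_sq_inv (ℓ s : ℝ) :
    ((collarRho ℓ s) ^ 2)⁻¹ = (4 * π ^ 2 / ℓ ^ 2) * cos (ℓ * s / (2 * π)) ^ 2 := by
  rw [collarRho, div_pow, inv_div]
  ring

lemma integral_cos_sq_mul_symm {a : ℝ} (ha : a ≠ 0) (X : ℝ) :
    ∫ s in -X..X, cos (a * s) ^ 2 = (a * X + sin (a * X) * cos (a * X)) / a := by
  rw [intervalIntegral.integral_comp_mul_left (fun x => cos x ^ 2) ha, integral_cos_sq,
    mul_neg, cos_neg, sin_neg, smul_eq_mul]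
  field_simp
  ring
lemma collarXdelta_mul {δ ℓ : ℝ} (hℓ : ℓ ≠ 0) (h : sinh (ℓ / 2) ≤ sinh δ) :
    ℓ / (2 * π) * collarXdelta δ ℓ = π / 2 - arcsin (sinh (ℓ / 2) / sinh δ) := by
  rw [collarXdelta, if_pos h]
  field_simp

lemma collar_thin_l2_norm_sq_eq {δ ℓ : ℝ} (hℓ : 0 < ℓ) (h : sinh (ℓ / 2) ≤ sinh δ) :
    8 * π * ∫ s in (-(collarXdelta δ ℓ))..(collarXdelta δ ℓ), ((collarRho ℓ s) ^ 2)⁻¹ =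
      32 * π ^ 5 / ℓ ^ 3 - 32 * π ^ 4 / ℓ ^ 3 *
        (2 * arcsin (sinh (ℓ / 2) / sinh δ) - sin (2 * arcsin (sinh (ℓ / 2) / sinh δ))) := by
  have ha : ℓ / (2 * π) ≠ 0 := by positivity
  simp_rw [collarRho_sq_inv, intervalIntegral.integral_const_mul, mul_div_right_comm ℓ _ (2 * π),
    integral_cos_sq_mul_symm ha, collarXdelta_mul hℓ.ne' h, sin_pi_div_two_sub,
    cos_pi_div_two_sub, sin_two_mul]
  field_simp
  ring

lemma two_mul_arcsin_sub_sin_le {u : ℝ} (hu₀ : 0 ≤ u) (hu₁ : u ≤ 1) :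
    2 * arcsin u - sin (2 * arcsin u) ≤ π ^ 3 / 6 * u ^ 3 := by
  have hθ₀ : 0 ≤ 2 * arcsin u := by have := arcsin_nonneg.2 hu₀; positivity
  have hθ := arcsin_le_pi_div_two_mul hu₀ hu₁
  calc 2 * arcsin u - sin (2 * arcsin u) ≤ (2 * arcsin u) ^ 3 / 6 := by
        linarith [sin_ge_sub_cube hθ₀]
    _ ≤ (2 * (π / 2 * u)) ^ 3 / 6 := by gcongr
    _ = π ^ 3 / 6 * u ^ 3 := by ring

/-- The squared `L²` norm of `dw²` over the `δ`-thin part of the collar `C(ℓ)`,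
`‖dw²‖² = 8π ∫_{-X_δ}^{X_δ} ρ_ℓ(s)^{-2} ds = (32π³/ℓ²) ∫_{-X_δ}^{X_δ} cos²(ℓs/(2π)) ds`,
equals `32π⁵ ℓ^{-3} + O(δ^{-3})`. -/
theorem l2_norm_dw2_thin_part :
    ∃ C : ℝ, 0 < C ∧
      ∀ δ ℓ : ℝ, 0 < δ → δ < Real.arsinh 1 → 0 < ℓ → ℓ ≤ 2 * δ →
        (8 * π * ∫ s in (-(collarXdelta δ ℓ))..(collarXdelta δ ℓ), ((collarRho ℓ s) ^ 2)⁻¹)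
          = (32 * π ^ 3 / ℓ ^ 2) *
              ∫ s in (-(collarXdelta δ ℓ))..(collarXdelta δ ℓ),
                Real.cos (ℓ * s / (2 * π)) ^ 2 ∧
        |(8 * π * ∫ s in (-(collarXdelta δ ℓ))..(collarXdelta δ ℓ),
              ((collarRho ℓ s) ^ 2)⁻¹) - 32 * π ^ 5 / ℓ ^ 3| ≤ C / δ ^ 3 := by
  refine ⟨2 * π ^ 7 / 3, by positivity, fun δ ℓ hδ _ hℓ hℓδ => ⟨?_, ?_⟩⟩
  · simp_rw [collarRho_sq_inv, intervalIntegral.integral_const_mul]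
    ring
  have hsinh : sinh (ℓ / 2) ≤ sinh δ := sinh_le_sinh.2 (by linarith)
  set u := sinh (ℓ / 2) / sinh δ with hu
  have hu₀ : 0 ≤ u := div_nonneg (sinh_nonneg_iff.2 (by positivity)) (sinh_nonneg_iff.2 hδ.le)
  have hu₁ : u ≤ 1 := (div_le_one (sinh_pos_iff.2 hδ)).2 hsinh
  have huδ : u ≤ ℓ / (2 * δ) := by
    rw [hu, ← div_div]; exact sinh_div_sinh_le_div (by positivity) (by linarith)
  have hgap : 0 ≤ 2 * arcsin u - sin (2 * arcsin u) :=
    sub_nonneg.2 (sin_le (by have := arcsin_nonneg.2 hu₀; positivity))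
  rw [collar_thin_l2_norm_sq_eq hℓ hsinh, sub_sub_cancel_left, abs_neg,
    abs_of_nonneg (by positivity)]
  calc 32 * π ^ 4 / ℓ ^ 3 * (2 * arcsin u - sin (2 * arcsin u))
      ≤ 32 * π ^ 4 / ℓ ^ 3 * (π ^ 3 / 6 * (ℓ / (2 * δ)) ^ 3) := by
        gcongr
        exact (two_mul_arcsin_sub_sin_le hu₀ hu₁).trans (by gcongr)
    _ = 2 * π ^ 7 / 3 / δ ^ 3 := by field_simp; ring
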